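/- Fix a real constant M > 0, set Ñ₁ = 1, Ñ₂ = M, Ñ₃ = 1, and fix natural numbers i, h, l. On the open set {I₁,I₂,I₃ > 0} ⊂ ℝ⁶ with coordinates (I₁,I₂,I₃,φ¹,φ²,φ³), define the vector fields Γ'_{ih} = (1/(3+i)) Σ_{j=1}^3 Ñ_j^h I_j^{h+1} (∂/∂I_j + ∂/∂φ^j). Then the Lie bracket satisfies L_{Γ'_{ih}}(Γ'_{il}) = [Γ'_{ih}, Γ'_{il}] = ((l − h)/(3+i)) Γ'_{i(l+h)}. -/

import Mathlib

open scoped BigOperators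

/-- Phase space with Delaunay-type coordinates `z.1 = (I₁,I₂,I₃)` and
angles `z.2 = (φ¹,φ²,φ³)`. -/
abbrev PhaseSpace := (Fin 3 → ℝ) × (Fin 3 → ℝ)

/-- Lie bracket of vector fields:
`[X,Y](z) = (DY)(z)·X(z) − (DX)(z)·Y(z)`. -/
noncomputable def lieB (X Y : PhaseSpace → PhaseSpace) (z : PhaseSpace) : PhaseSpace :=
  fderiv ℝ Y z (X z) - fderiv ℝ X z (Y z)

/-- The constants `Ñ₁ = 1, Ñ₂ = M, Ñ₃ = 1`. -/
noncomputable def Ntil (M : ℝ) : Fin 3 → ℝ := ![1, M, 1]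

/-- The vector fields `Γ'_{ih} = (1/(3+i)) Σ_j Ñ_j^h I_j^{h+1} (∂/∂I_j + ∂/∂φ^j)`. -/
noncomputable def Gam' (M : ℝ) (i h : ℕ) (z : PhaseSpace) : PhaseSpace :=
  ((fun j => (1 / (3 + (i : ℝ))) * (Ntil M j) ^ h * (z.1 j) ^ (h + 1)),
   (fun j => (1 / (3 + (i : ℝ))) * (Ntil M j) ^ h * (z.1 j) ^ (h + 1)))

/-! Each `Γ'_{ih}` moves the actions and the angles by the same vector, whose `j`-th entry
`c_j(h) I_j^(h+1)` depends on `I_j` alone. The bracket therefore splits into one-variable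
brackets `[t^(h+1) ∂_t, t^(l+1) ∂_t] = (l - h) t^(l+h+1) ∂_t`, and the coefficients recombine
because `c_j(h) c_j(l) = c_j(l + h) / (3 + i)`. -/

section MonomialField

variable {ι : Type*}

/-- The field `Σ_j a_j x_j^(k+1) ∂/∂x_j` on `ℝ^ι`, as a map `ℝ^ι → ℝ^ι`. -/
def monomialField (a : ι → ℝ) (k : ℕ) (x : ι → ℝ) : ι → ℝ :=
  fun j => a j * x j ^ (k + 1)

lemma monomialField_smul (r : ℝ) (a : ι → ℝ) (k : ℕ) :
    monomialField (r • a) k = r • monomialField a k := by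
  ext x j
  simp only [monomialField, Pi.smul_apply, smul_eq_mul, mul_assoc]

lemma hasFDerivAt_monomialField [Fintype ι] (a : ι → ℝ) (k : ℕ) (x : ι → ℝ) :
    HasFDerivAt (monomialField a k)
      (ContinuousLinearMap.pi fun j => (a j * ((k + 1 : ℝ) * x j ^ k)) •
        (ContinuousLinearMap.proj j : (ι → ℝ) →L[ℝ] ℝ)) x := by
  rw [hasFDerivAt_pi']
  intro j
  have hpow := ((hasDerivAt_pow (k + 1) (x j)).comp_hasFDerivAt x
    (ContinuousLinearMap.proj (R := ℝ) (φ := fun _ : ι => ℝ) j).hasFDerivAt).const_mul (a j)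
  refine hpow.congr_fderiv ?_
  ext v
  simp only [ContinuousLinearMap.proj_pi, FunLike.coe_smul, Pi.smul_apply, smul_eq_mul]
  push_cast
  ring

lemma fderiv_monomialField_apply [Fintype ι] (a : ι → ℝ) (k : ℕ) (x v : ι → ℝ) :
    fderiv ℝ (monomialField a k) x v = fun j => a j * ((k + 1 : ℝ) * x j ^ k) * v j := by
  ext j
  simp [(hasFDerivAt_monomialField a k x).fderiv]

/-- The Witt-algebra relation `[x^(h+1) ∂, x^(l+1) ∂] = (l - h) x^(l+h+1) ∂`, coordinatewise. -/
lemma monomialField_bracket [Fintype ι] (a b : ι → ℝ) (h l : ℕ) (x : ι → ℝ) :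
    fderiv ℝ (monomialField b l) x (monomialField a h x)
        - fderiv ℝ (monomialField a h) x (monomialField b l x)
      = ((l : ℝ) - h) • monomialField (a * b) (l + h) x := by
  ext j
  simp only [fderiv_monomialField_apply, monomialField, Pi.sub_apply, Pi.smul_apply,
    Pi.mul_apply, smul_eq_mul]
  ring

end MonomialField

/-- The field `Σ_j F_j(I) (∂/∂I_j + ∂/∂φ^j)`. -/
def diagField (F : (Fin 3 → ℝ) → (Fin 3 → ℝ)) (z : PhaseSpace) : PhaseSpace :=
  (F z.1, F z.1)

lemma lieB_diagField {F G : (Fin 3 → ℝ) → (Fin 3 → ℝ)} {z : PhaseSpace}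
    (hF : DifferentiableAt ℝ F z.1) (hG : DifferentiableAt ℝ G z.1) :
    lieB (diagField F) (diagField G) z
      = diagField (fun x => fderiv ℝ G x (F x) - fderiv ℝ F x (G x)) z := by
  have hdiag : ∀ {H : (Fin 3 → ℝ) → (Fin 3 → ℝ)}, DifferentiableAt ℝ H z.1 →
      ∀ v, fderiv ℝ (diagField H) z v = (fderiv ℝ H z.1 v.1, fderiv ℝ H z.1 v.1) := by
    intro H hH v
    have hcomp := hH.hasFDerivAt.comp z hasFDerivAt_fst
    rw [show diagField H = fun z => ((H ∘ Prod.fst) z, (H ∘ Prod.fst) z) from rfl,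
      (hcomp.prodMk hcomp).fderiv]
    rfl
  simp only [lieB, hdiag hF, hdiag hG, diagField, Prod.mk_sub_mk]

noncomputable def gamCoeff (M : ℝ) (i h : ℕ) (j : Fin 3) : ℝ :=
  1 / (3 + (i : ℝ)) * Ntil M j ^ h

lemma gamCoeff_mul (M : ℝ) (i h l : ℕ) :
    gamCoeff M i h * gamCoeff M i l = (1 / (3 + (i : ℝ))) • gamCoeff M i (l + h) := by
  ext j
  simp only [gamCoeff, Pi.mul_apply, Pi.smul_apply, smul_eq_mul, pow_add]
  ring

lemma Gam'_eq_diagField (M : ℝ) (i h : ℕ) :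
    Gam' M i h = diagField (monomialField (gamCoeff M i h) h) :=
  rfl

theorem stmt17_general (M : ℝ) (i h l : ℕ) :
    ∀ z : PhaseSpace, (∀ j : Fin 3, 0 < z.1 j) →
      lieB (Gam' M i h) (Gam' M i l) z
        = (((l : ℝ) - (h : ℝ)) / (3 + (i : ℝ))) • Gam' M i (l + h) z := by
  intro z _
  simp only [Gam'_eq_diagField]
  rw [lieB_diagField (hasFDerivAt_monomialField _ _ _).differentiableAt
    (hasFDerivAt_monomialField _ _ _).differentiableAt]
  simp only [diagField, monomialField_bracket, gamCoeff_mul, monomialField_smul, Prod.smul_mk,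
    Pi.smul_apply, smul_smul]
  rw [mul_one_div]

/-- `L_{Γ'_{ih}}(Γ'_{il}) = [Γ'_{ih}, Γ'_{il}] = ((l−h)/(3+i)) Γ'_{i(l+h)}`
on `{I₁,I₂,I₃ > 0}`. -/
theorem stmt17 (M : ℝ) (hM : 0 < M) (i h l : ℕ) :
    ∀ z : PhaseSpace, (∀ j : Fin 3, 0 < z.1 j) →
      lieB (Gam' M i h) (Gam' M i l) z
        = (((l : ℝ) - (h : ℝ)) / (3 + (i : ℝ))) • Gam' M i (l + h) z :=
  stmt17_general M i h l
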